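/- arXiv:1402.4343 — 3 statements merged into one kernel-verified Lean document; each statement's English description precedes it below -/
import Mathlib

section
/- Let y_r (1 ≤ r ≤ l) be positive integers and Z_k^j ≥ 0 integers (1 ≤ k ≤ l, 1 ≤ j ≤ m) such that for each j and each r, y_r ≥ ∑_{k=r}^{l} Z_k^j. Set X_j = ∑_{k=1}^l Z_k^j. Then ∏_{j=1}^{m} ∏_{r=1}^{l} y_r^{Z_r^j} ≥ ∏_{j=1}^{m} X_j!. -/
lemma fact_add_le (a b : ℕ) : Nat.factorial (b + a) ≤ Nat.factorial b * (b + a) ^ a := by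
  induction a with
  | zero => simp
  | succ a ih =>
    calc Nat.factorial (b + (a + 1)) = (b + a + 1) * Nat.factorial (b + a) := by
          rw [← Nat.add_assoc]; rfl
      _ ≤ (b + a + 1) * (Nat.factorial b * (b + a) ^ a) := by
          exact Nat.mul_le_mul_left _ ih
      _ ≤ (b + a + 1) * (Nat.factorial b * (b + a + 1) ^ a) := by
          exact Nat.mul_le_mul_left _ (Nat.mul_le_mul_left _ (Nat.pow_le_pow_left (by omega) _))
      _ = Nat.factorial b * (b + (a + 1)) ^ (a + 1) := by ring_nf
  
lemma aux : ∀ (n : ℕ) (y Z : ℕ → ℕ),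
    (∀ r, r < n → ∑ k ∈ Finset.Ico r n, Z k ≤ y r) →
    Nat.factorial (∑ k ∈ Finset.range n, Z k) ≤ ∏ r ∈ Finset.range n, y r ^ Z r := by
  intro n
  induction n with
  | zero => simp
  | succ n ih =>
    intro y Z h
    have key := ih (fun r => y (r + 1)) (fun k => Z (k + 1)) (by
      intro r hr
      have := h (r + 1) (by omega)
      calc ∑ k ∈ Finset.Ico r n, Z (k + 1)
          = ∑ k ∈ Finset.Ico (r + 1) (n + 1), Z k := by
            rw [Finset.sum_Ico_eq_sum_range, Finset.sum_Ico_eq_sum_range]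
            apply Finset.sum_congr (by congr 1; omega)
            intro i _; congr 1; omega
        _ ≤ y (r + 1) := this)
    rw [Finset.sum_range_succ', Finset.prod_range_succ']
    set S' := ∑ k ∈ Finset.range n, Z (k + 1) with hS'
    have h0 : S' + Z 0 ≤ y 0 := by
      have := h 0 (by omega)
      rw [show Finset.Ico 0 (n+1) = Finset.range (n+1) from by rw [Finset.range_eq_Ico], Finset.sum_range_succ'] at this
      exact this
    calc Nat.factorial (S' + Z 0)
        ≤ Nat.factorial S' * (S' + Z 0) ^ Z 0 := fact_add_le _ _
      _ ≤ (∏ r ∈ Finset.range n, y (r + 1) ^ Z (r + 1)) * y 0 ^ Z 0 :=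
          Nat.mul_le_mul key (Nat.pow_le_pow_left h0 _)

theorem stmt6 (l m : ℕ) (y : ℕ → ℕ) (hy : ∀ r, 1 ≤ r → r ≤ l → 0 < y r)
    (Z : ℕ → ℕ → ℕ)
    (hdom : ∀ j, 1 ≤ j → j ≤ m → ∀ r, 1 ≤ r → r ≤ l →
      ∑ k ∈ Finset.Icc r l, Z k j ≤ y r)
    (X : ℕ → ℕ) (hX : ∀ j, X j = ∑ k ∈ Finset.Icc 1 l, Z k j) :
    ∏ j ∈ Finset.Icc 1 m, Nat.factorial (X j) ≤
      ∏ j ∈ Finset.Icc 1 m, ∏ r ∈ Finset.Icc 1 l, y r ^ Z r j := by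
  apply Finset.prod_le_prod'
  intro j hj
  rw [Finset.mem_Icc] at hj
  rw [hX j]
  have key := aux l (fun r => y (r + 1)) (fun k => Z (k + 1) j) (by
    intro r hr
    have := hdom j hj.1 hj.2 (r + 1) (by omega) (by omega)
    calc ∑ k ∈ Finset.Ico r l, Z (k + 1) j
        = ∑ k ∈ Finset.Icc (r + 1) l, Z k j := by
          rw [← Finset.Ico_add_one_right_eq_Icc, Finset.sum_Ico_eq_sum_range, Finset.sum_Ico_eq_sum_range]
          apply Finset.sum_congr (by congr 1; omega)
          intro i _; congr 1; omega
      _ ≤ y (r + 1) := this)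
  calc Nat.factorial (∑ k ∈ Finset.Icc 1 l, Z k j)
      = Nat.factorial (∑ k ∈ Finset.range l, Z (k + 1) j) := by
        congr 1
        rw [← Finset.Ico_add_one_right_eq_Icc, Finset.sum_Ico_eq_sum_range]
        apply Finset.sum_congr (by simp) (fun i _ => by congr 1; omega)
    _ ≤ ∏ r ∈ Finset.range l, y (r + 1) ^ Z (r + 1) j := key
    _ = ∏ r ∈ Finset.Icc 1 l, y r ^ Z r j := by
        rw [← Finset.Ico_add_one_right_eq_Icc, Finset.prod_Ico_eq_prod_range]
        apply Finset.prod_congr (by simp) (fun i _ => by congr 2 <;> omega)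
end

section
/- Let y_1 ≥ y_2 ≥ ... ≥ y_l be positive integers with ∑_r y_r = n, and suppose there exist nonnegative integers Z_r^j (1 ≤ r ≤ l, 1 ≤ j ≤ m) and positive integers X_1,...,X_m with ∑_j X_j = n, X_j = ∑_{r=1}^l Z_r^j for all j, ∑_j Z_r^j ≤ α·y_r for all r (for some α ≥ 1), and y_r ≥ ∑_{k=r}^{l} Z_k^j for all j, r. Then ∏_{r=1}^{l} y_r^{α y_r} ≥ ∏_{j=1}^{m} X_j!. -/
lemma fact_add_le_s14 (a : ℕ) : ∀ m c : ℕ, a + m ≤ c → (a + m).factorial ≤ a.factorial * c ^ m := by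
  intro m
  induction m with
  | zero => intro c _; simp
  | succ k ih =>
    intro c hc
    have h1 : a + k ≤ c := by omega
    calc (a + (k+1)).factorial = (a + k + 1) * (a + k).factorial := by
          rw [show a + (k+1) = (a+k) + 1 by ring, Nat.factorial_succ]
      _ ≤ c * (a.factorial * c ^ k) := Nat.mul_le_mul hc (ih c h1)
      _ = a.factorial * c ^ (k+1) := by ring

lemma suffix_fact (l : ℕ) (y Z : ℕ → ℕ)
    (hdom : ∀ r, 1 ≤ r → r ≤ l → ∑ k ∈ Finset.Icc r l, Z k ≤ y r) :
    ∀ d r, r = l + 1 - d → 1 ≤ r →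
      (∑ k ∈ Finset.Icc r l, Z k).factorial ≤ ∏ k ∈ Finset.Icc r l, y k ^ Z k := by
  intro d
  induction d with
  | zero =>
    intro r hr _
    have : Finset.Icc r l = ∅ := by
      apply Finset.Icc_eq_empty; omega
    simp [this]
  | succ t ih =>
    intro r hr hr1
    by_cases hrl : r ≤ l
    · have hr' : r + 1 = l + 1 - t := by omega
      have hstep := ih (r+1) hr' (by omega)
      have hins : Finset.Icc r l = insert r (Finset.Icc (r+1) l) := by
        ext x; simp [Finset.mem_Icc]; omega
      have hnm : r ∉ Finset.Icc (r+1) l := by simp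
      rw [hins, Finset.sum_insert hnm, Finset.prod_insert hnm]
      set a := ∑ k ∈ Finset.Icc (r+1) l, Z k with ha
      have hbound : Z r + a ≤ y r := by
        have := hdom r hr1 hrl
        rw [hins, Finset.sum_insert hnm] at this
        exact this
      calc (Z r + a).factorial = (a + Z r).factorial := by rw [Nat.add_comm]
        _ ≤ a.factorial * (y r) ^ (Z r) := fact_add_le_s14 a (Z r) (y r) (by omega)
        _ ≤ (∏ k ∈ Finset.Icc (r+1) l, y k ^ Z k) * (y r) ^ (Z r) :=
            Nat.mul_le_mul_right _ hstep
        _ = (y r) ^ (Z r) * ∏ k ∈ Finset.Icc (r+1) l, y k ^ Z k := by ring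
    · have : Finset.Icc r l = ∅ := by apply Finset.Icc_eq_empty; omega
      simp [this]

open Real in
theorem stmt14 (l m n : ℕ) (y : ℕ → ℕ)
    (hypos : ∀ r, 1 ≤ r → r ≤ l → 0 < y r)
    (hydec : ∀ r s, 1 ≤ r → r ≤ s → s ≤ l → y s ≤ y r)
    (hysum : ∑ r ∈ Finset.Icc 1 l, y r = n)
    (Z : ℕ → ℕ → ℕ) (X : ℕ → ℕ)
    (hXpos : ∀ j, 1 ≤ j → j ≤ m → 0 < X j)
    (hXsum : ∑ j ∈ Finset.Icc 1 m, X j = n)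
    (hXZ : ∀ j, 1 ≤ j → j ≤ m → X j = ∑ r ∈ Finset.Icc 1 l, Z r j)
    (α : ℝ) (hα : 1 ≤ α)
    (hcap : ∀ r, 1 ≤ r → r ≤ l →
      ((∑ j ∈ Finset.Icc 1 m, Z r j : ℕ) : ℝ) ≤ α * (y r : ℝ))
    (hdom : ∀ j, 1 ≤ j → j ≤ m → ∀ r, 1 ≤ r → r ≤ l →
      ∑ k ∈ Finset.Icc r l, Z k j ≤ y r) :
    ((∏ j ∈ Finset.Icc 1 m, Nat.factorial (X j) : ℕ) : ℝ) ≤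
      ∏ r ∈ Finset.Icc 1 l, ((y r : ℝ) ^ (α * (y r : ℝ)) : ℝ) := by
  -- step 1: natural number inequality ∏ X_j! ≤ ∏_r y_r^{∑_j Z_r^j}
  have key : ∀ j ∈ Finset.Icc 1 m,
      (X j).factorial ≤ ∏ r ∈ Finset.Icc 1 l, (y r) ^ (Z r j) := by
    intro j hj
    rw [Finset.mem_Icc] at hj
    rw [hXZ j hj.1 hj.2]
    exact suffix_fact l y (fun r => Z r j)
      (fun r h1 h2 => hdom j hj.1 hj.2 r h1 h2) l 1 (by omega) le_rfl
  have nat_ineq : (∏ j ∈ Finset.Icc 1 m, Nat.factorial (X j)) ≤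
      ∏ r ∈ Finset.Icc 1 l, (y r) ^ (∑ j ∈ Finset.Icc 1 m, Z r j) := by
    calc (∏ j ∈ Finset.Icc 1 m, Nat.factorial (X j))
        ≤ ∏ j ∈ Finset.Icc 1 m, ∏ r ∈ Finset.Icc 1 l, (y r) ^ (Z r j) :=
          Finset.prod_le_prod' key
      _ = ∏ r ∈ Finset.Icc 1 l, ∏ j ∈ Finset.Icc 1 m, (y r) ^ (Z r j) :=
          Finset.prod_comm
      _ = ∏ r ∈ Finset.Icc 1 l, (y r) ^ (∑ j ∈ Finset.Icc 1 m, Z r j) := by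
          refine Finset.prod_congr rfl fun r _ => ?_
          rw [Finset.prod_pow_eq_pow_sum]
  -- step 2: pass to ℝ and compare with rpow
  calc ((∏ j ∈ Finset.Icc 1 m, Nat.factorial (X j) : ℕ) : ℝ)
      ≤ ((∏ r ∈ Finset.Icc 1 l, (y r) ^ (∑ j ∈ Finset.Icc 1 m, Z r j) : ℕ) : ℝ) :=
        Nat.cast_le.2 nat_ineq
    _ = ∏ r ∈ Finset.Icc 1 l, ((y r : ℝ)) ^ ((∑ j ∈ Finset.Icc 1 m, Z r j : ℕ) : ℝ) := by
        rw [Nat.cast_prod]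
        refine Finset.prod_congr rfl fun r _ => ?_
        rw [Nat.cast_pow, Real.rpow_natCast]
    _ ≤ ∏ r ∈ Finset.Icc 1 l, ((y r : ℝ) ^ (α * (y r : ℝ)) : ℝ) := by
        refine Finset.prod_le_prod (fun r _ => ?_) (fun r hr => ?_)
        · positivity
        · rw [Finset.mem_Icc] at hr
          have hy1 : (1 : ℝ) ≤ (y r : ℝ) := by
            exact_mod_cast hypos r hr.1 hr.2
          exact Real.rpow_le_rpow_of_exponent_le hy1 (hcap r hr.1 hr.2)
end

section
/- Let G = (U, c) be a concave TU cooperative game, i.e., c : 𝒫(U) → ℝ is submodular, monotone, with c(∅) = 0, and let π be any ordering i_1,...,i_N of U. Define x_{i_r} = c({i_1,...,i_r}) - c({i_1,...,i_{r-1}}). Then x is in the core of G: ∑_{i∈U} x_i = c(U), and ∑_{i∈S} x_i ≤ c(S) for every S ⊆ U. -/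
theorem stmt19 {U : Type*} [DecidableEq U] [Fintype U] (c : Finset U → ℝ)
    (hmono : ∀ S T : Finset U, S ⊆ T → c S ≤ c T)
    (hsub : ∀ S T : Finset U, c (S ∪ T) + c (S ∩ T) ≤ c S + c T)
    (hempty : c ∅ = 0)
    (N : ℕ) (π : Fin N ≃ U)
    (prefx : ℕ → Finset U)
    (hprefx : ∀ r : ℕ, prefx r = (Finset.univ.filter (fun k : Fin N => (k : ℕ) < r)).image π)
    (x : U → ℝ)
    (hx : ∀ i : U, x i = c (prefx ((π.symm i : ℕ) + 1)) - c (prefx (π.symm i : ℕ))) :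
    (∑ i, x i = c Finset.univ) ∧ (∀ S : Finset U, ∑ i ∈ S, x i ≤ c S) := by
  have hmem : ∀ (r : ℕ) (i : U), i ∈ prefx r ↔ (π.symm i : ℕ) < r := by
    intro r i
    rw [hprefx]
    simp only [Finset.mem_image, Finset.mem_filter, Finset.mem_univ, true_and]
    constructor
    · rintro ⟨k, hk, rfl⟩; simpa using hk
    · intro h; exact ⟨π.symm i, h, by simp⟩
  have h0 : prefx 0 = ∅ := by
    ext i; simp [hmem]
  have hN : prefx N = Finset.univ := by
    ext i; simp [hmem, (π.symm i).isLt]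
  have hsubset : ∀ r, prefx r ⊆ prefx (r + 1) := by
    intro r i hi
    rw [hmem] at hi ⊢; omega
  have hins : ∀ (k : Fin N), prefx ((k : ℕ) + 1) = insert (π k) (prefx (k : ℕ)) := by
    intro k
    ext i
    simp only [hmem, Finset.mem_insert]
    constructor
    · intro h
      rcases Nat.lt_succ_iff_lt_or_eq.mp h with h | h
      · right; exact h
      · left
        have : π.symm i = k := Fin.ext h
        rw [← this]; simp
    · rintro (rfl | h)
      · simp
      · omega
  have hnotmem : ∀ (k : Fin N), π k ∉ prefx (k : ℕ) := by
    intro k hk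
    rw [hmem] at hk; simp at hk
  -- key induction
  have key : ∀ (r : ℕ) (S : Finset U), ∑ i ∈ S ∩ prefx r, x i ≤ c (S ∩ prefx r) := by
    intro r
    induction r with
    | zero => intro S; simp [h0, hempty]
    | succ r ih =>
      intro S
      by_cases hr : r < N
      · set k : Fin N := ⟨r, hr⟩ with hk
        have hkr : (k : ℕ) = r := rfl
        have hinsr : prefx (r + 1) = insert (π k) (prefx r) := by
          rw [← hkr]; exact hins k
        by_cases hS : π k ∈ S
        · have hSins : S ∩ prefx (r + 1) = insert (π k) (S ∩ prefx r) := by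
            rw [hinsr, Finset.inter_insert_of_mem hS]
          have hnm : π k ∉ S ∩ prefx r := by
            intro h
            exact hnotmem k (Finset.mem_of_mem_inter_right h)
          rw [hSins, Finset.sum_insert hnm]
          have hxk : x (π k) = c (prefx (r + 1)) - c (prefx r) := by
            rw [hx]; simp [hkr]
          have hsub' := hsub (S ∩ prefx (r + 1)) (prefx r)
          have hU : (S ∩ prefx (r + 1)) ∪ prefx r = prefx (r + 1) := by
            rw [hSins, Finset.insert_union]
            rw [Finset.union_eq_right.mpr (Finset.inter_subset_right)]
            rw [hinsr]
          have hI : (S ∩ prefx (r + 1)) ∩ prefx r = S ∩ prefx r := by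
            rw [Finset.inter_assoc, Finset.inter_eq_right.mpr (hsubset r)]
          rw [hU, hI, hSins] at hsub'
          have := ih S
          rw [hxk]
          linarith
        · have hSeq : S ∩ prefx (r + 1) = S ∩ prefx r := by
            rw [hinsr, Finset.inter_insert_of_notMem hS]
          rw [hSeq]; exact ih S
      · have heq : prefx (r + 1) = prefx r := by
          ext i
          rw [hmem, hmem]
          have := (π.symm i).isLt
          omega
        rw [heq]; exact ih S
  constructor
  · -- efficiency via telescoping
    have h1 : ∑ i, x i = ∑ k : Fin N, x (π k) := (Equiv.sum_comp π x).symm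
    have h2 : ∀ k : Fin N, x (π k) = c (prefx ((k : ℕ) + 1)) - c (prefx (k : ℕ)) := by
      intro k; rw [hx]; simp
    rw [h1]
    calc ∑ k : Fin N, x (π k)
        = ∑ k ∈ Finset.range N, (c (prefx (k + 1)) - c (prefx k)) := by
          rw [Finset.sum_range fun k => c (prefx (k + 1)) - c (prefx k)]
          exact Finset.sum_congr rfl fun k _ => h2 k
      _ = c (prefx N) - c (prefx 0) := Finset.sum_range_sub (fun k => c (prefx k)) N
      _ = c Finset.univ := by rw [hN, h0, hempty]; ring
  · intro S
    have := key N S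
    rwa [hN, Finset.inter_univ] at this
end
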